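/- arXiv:2306.09059 — 7 statements merged into one kernel-verified Lean document; each statement's English description precedes it below -/
import Mathlib

section
/- Consider N point particles on a circle of circumference L, with coordinates 0 = x_0 < x_1 < ... < x_{N-1} < L extended periodically to the real line by x_{k+N} = x_k + L, interacting with nearest neighbors through potential energy U = (ω²/2) Σ_k (x_k − x_{k−1} − a)² where a = L/N, with a constant external force f > 0 acting on particle 0 (and each of its periodic copies kN) and a constant force −φ (φ > 0) acting on every particle. Write x_k − x_{k−1} = L/N + ε_k/N². Then an equilibrium configuration (one in which the total force on every particle is zero) satisfying the strict ordering exists if and only if both (1) φ = f/N and (2) f/(2ω²L) < 1/(N(1 − 1/N)). In that case the equilibrium is unique and is given by ε_k = −fN(N−1)/(2ω²) + (k−1)fN/ω² for k = 1, ..., N−1 and ε_N = fN(N−1)/(2ω²). -/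
/-!
Let `d k = x k - x (k - 1) - L / N` be the deviation of the `k`-th spacing. Equilibrium reads
`ω² (d (k + 1) - d k) = φ - f [N ∣ k]`, and `d` is `N`-periodic, so summing over one period gives
`N φ = f`. Then `d` grows by `g = f / (N ω²)` at every step except across multiples of `N`, where it
drops by `(N - 1) g`. The function `g ((k - 1) mod N)` has the same increments, so `d` equals it up
to a constant, which is fixed by `∑_{k=1}^N d k = 0` (the particles go once around the circle). The smallest
spacing is then `L / N - (N - 1) g / 2`, at `k ≡ 1`, so the ordering holds iff this is positive,
which is condition (2); conversely the periodic parabola `equilibriumConfig` realizes these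
spacings. Uniqueness holds because the spacings together with `x 0 = 0` determine `x`.
-/

/-- A configuration of `N` particles on a circle of circumference `L`, realized as a
bi-infinite strictly increasing sequence on the real line with `x 0 = 0` and
periodicity `x (k + N) = x k + L`. -/
def CircleConfig (N : ℕ) (L : ℝ) (x : ℤ → ℝ) : Prop :=
  x 0 = 0 ∧ (∀ k : ℤ, x (k + N) = x k + L) ∧ (∀ k : ℤ, x k < x (k + 1))

/-- Equilibrium: the total force on every particle vanishes.  The forces are the harmonic
nearest-neighbor forces with frequency `ω` and natural spacing `a = L/N`, the constant
force `f` on every particle whose index is a multiple of `N`, and the constant force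
`-φ` on every particle. -/
def CircleEquilibrium (N : ℕ) (L ω f φ : ℝ) (x : ℤ → ℝ) : Prop :=
  ∀ k : ℤ,
    ω ^ 2 * (x (k + 1) - x k - L / N) - ω ^ 2 * (x k - x (k - 1) - L / N)
      + (if (N : ℤ) ∣ k then f else 0) - φ = 0

open Finset

theorem Int.emod_sub_emod_sub_one {N : ℤ} (hN : 0 < N) (k : ℤ) :
    k % N - (k - 1) % N = if N ∣ k then 1 - N else 1 := by
  obtain ⟨s, q, hk, hs0, hsN, hs⟩ :
      ∃ s q, k = s + 1 + N * q ∧ 0 ≤ s ∧ s < N ∧ (k - 1) % N = s :=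
    ⟨_, (k - 1) / N, by linarith [Int.emod_add_mul_ediv (k - 1) N], Int.emod_nonneg _ hN.ne',
      Int.emod_lt_of_pos _ hN, rfl⟩
  subst hk
  rw [hs, Int.add_mul_emod_self_left]
  rcases (show s + 1 < N ∨ s + 1 = N by omega) with hlt | heq
  · have hndvd : ¬ N ∣ s + 1 + N * q := fun h => by
      have := Int.emod_eq_zero_of_dvd h
      rw [Int.add_mul_emod_self_left, Int.emod_eq_of_lt (by omega) hlt] at this
      omega
    rw [if_neg hndvd, Int.emod_eq_of_lt (by omega) hlt]
    ring
  · rw [heq, Int.emod_self, if_pos ⟨1 + q, by ring⟩]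
    omega

noncomputable section

/-- `ε_k / N²` in the paper's notation. -/
def spacingDeviation (N : ℕ) (L : ℝ) (x : ℤ → ℝ) (k : ℤ) : ℝ :=
  x k - x (k - 1) - L / N

def equilibriumDeviation (N : ℕ) (g : ℝ) (k : ℤ) : ℝ :=
  g * (((k - 1) % N : ℤ) : ℝ) - g * (N - 1) / 2

def equilibriumConfig (N : ℕ) (L g : ℝ) (k : ℤ) : ℝ :=
  k * (L / N) + g / 2 * ((k % N : ℤ) : ℝ) * (((k % N : ℤ) : ℝ) - N)

end

section

variable {N : ℕ} {L : ℝ}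

theorem sum_range_spacingDeviation {x : ℤ → ℝ} (hx : x N = x 0 + L) :
    ∑ i ∈ range N, spacingDeviation N L x (i + 1) = 0 := by
  rcases Nat.eq_zero_or_pos N with rfl | hN
  · simp
  have htel := sum_range_sub (fun i : ℕ => x i) N
  push_cast at htel
  simp only [spacingDeviation, add_sub_cancel_right]
  rw [sum_sub_distrib, htel, hx, sum_const, card_range, nsmul_eq_mul]
  field_simp
  ring

theorem spacingDeviation_periodic {x : ℤ → ℝ} (hper : ∀ k : ℤ, x (k + N) = x k + L) :
    Function.Periodic (spacingDeviation N L x) N := by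
  intro k
  simp only [spacingDeviation, add_sub_right_comm k, hper]
  ring

theorem eq_of_spacingDeviation_eq {x y : ℤ → ℝ} (h0 : x 0 = y 0)
    (h : spacingDeviation N L x = spacingDeviation N L y) : x = y := by
  have hper : Function.Periodic (x - y) 1 := fun k => by
    have := congrFun h (k + 1)
    simp only [spacingDeviation, add_sub_cancel_right] at this
    simp only [Pi.sub_apply]
    linarith
  funext k
  have := hper.int_mul_eq k
  simp only [mul_one, Int.cast_id, Pi.sub_apply, h0, sub_self] at this
  linarith

end

theorem equilibriumDeviation_of_mem_Icc {N : ℕ} (g : ℝ) {k : ℤ} (hk : k ∈ Set.Icc 1 (N : ℤ)) :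
    equilibriumDeviation N g k = g * (k - 1) - g * (N - 1) / 2 := by
  rw [equilibriumDeviation, Int.emod_eq_of_lt (by linarith [hk.1]) (by linarith [hk.2])]
  push_cast
  ring

theorem sum_range_equilibriumDeviation (N : ℕ) (g : ℝ) :
    ∑ i ∈ range N, equilibriumDeviation N g (i + 1) = 0 := by
  have hgauss : ∀ n : ℕ, (∑ i ∈ range n, (i : ℝ)) * 2 = n * (n - 1) := fun n => by
    induction n with
    | zero => simp
    | succ n ih => rw [sum_range_succ, add_mul, ih]; push_cast; ring
  rw [sum_congr rfl fun i hi => equilibriumDeviation_of_mem_Icc g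
    ⟨by omega, by have := mem_range.1 hi; omega⟩]
  push_cast
  simp only [add_sub_cancel_right, sum_sub_distrib, ← mul_sum, sum_const, card_range,
    nsmul_eq_mul]
  linear_combination g / 2 * hgauss N

theorem equilibriumDeviation_add_one_sub {N : ℕ} (hN : 0 < N) (g : ℝ) (k : ℤ) :
    equilibriumDeviation N g (k + 1) - equilibriumDeviation N g k =
      g * if (N : ℤ) ∣ k then 1 - (N : ℝ) else 1 := by
  have h := congrArg (Int.cast : ℤ → ℝ) (Int.emod_sub_emod_sub_one (N := N) (by positivity) k)
  push_cast at h
  simp only [equilibriumDeviation, add_sub_cancel_right]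
  split_ifs at h ⊢ <;> linear_combination g * h

theorem sum_range_ite_natCast_dvd {N : ℕ} (hN : 0 < N) (f : ℝ) :
    ∑ i ∈ range N, (if (N : ℤ) ∣ i then f else 0) = f := by
  rw [sum_eq_single_of_mem 0 (mem_range.2 hN) fun i hi hi0 => if_neg ?_]
  · simp
  · exact_mod_cast Nat.not_dvd_of_pos_of_lt (Nat.pos_of_ne_zero hi0) (mem_range.1 hi)

theorem circleEquilibrium_iff_spacingDeviation {N : ℕ} {L ω f φ : ℝ} {x : ℤ → ℝ} :
    CircleEquilibrium N L ω f φ x ↔ ∀ k : ℤ,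
      ω ^ 2 * (spacingDeviation N L x (k + 1) - spacingDeviation N L x k)
        + (if (N : ℤ) ∣ k then f else 0) - φ = 0 := by
  simp only [CircleEquilibrium, spacingDeviation, add_sub_cancel_right, mul_sub]

theorem circleEquilibrium_iff {N : ℕ} (hN : 0 < N) {L ω f : ℝ} (hω : ω ≠ 0) {x : ℤ → ℝ} :
    CircleEquilibrium N L ω f (f / N) x ↔ ∀ k : ℤ,
      spacingDeviation N L x (k + 1) - spacingDeviation N L x k =
        f / (N * ω ^ 2) * if (N : ℤ) ∣ k then 1 - (N : ℝ) else 1 := by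
  rw [circleEquilibrium_iff_spacingDeviation]
  refine forall_congr' fun k => ?_
  split_ifs <;> field_simp <;> constructor <;> intro h <;> linear_combination h

namespace CircleEquilibrium

variable {N : ℕ} (hN : 0 < N) {L ω f φ : ℝ} {x : ℤ → ℝ}
  (hper : ∀ k : ℤ, x (k + N) = x k + L)
include hN hper

theorem phi_eq (h : CircleEquilibrium N L ω f φ x) : φ = f / N := by
  have hsum : ∑ i ∈ range N, (ω ^ 2 * (spacingDeviation N L x (i + 1) - spacingDeviation N L x i)
      + (if (N : ℤ) ∣ i then f else 0) - φ) = 0 :=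
    sum_eq_zero fun i _ => circleEquilibrium_iff_spacingDeviation.1 h i
  have htel := sum_range_sub (fun i : ℕ => spacingDeviation N L x i) N
  push_cast at htel
  have hperiod := spacingDeviation_periodic hper 0
  rw [zero_add] at hperiod
  rw [sum_sub_distrib, sum_add_distrib, ← mul_sum, htel, hperiod,
    sum_range_ite_natCast_dvd hN, sum_const, card_range, nsmul_eq_mul] at hsum
  field_simp
  linarith

theorem spacingDeviation_eq (hω : ω ≠ 0) (h : CircleEquilibrium N L ω f φ x) :
    spacingDeviation N L x = equilibriumDeviation N (f / (N * ω ^ 2)) := by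
  obtain rfl := h.phi_eq hN hper
  set g := f / (N * ω ^ 2)
  set e := spacingDeviation N L x - equilibriumDeviation N g
  have he : Function.Periodic e 1 := fun k => by
    have := (circleEquilibrium_iff hN hω).1 h k
    rw [← equilibriumDeviation_add_one_sub hN] at this
    simp only [e, Pi.sub_apply]
    linarith
  have hconst (k : ℤ) : e k = e 0 := by simpa using he.int_mul_eq k
  have he0 : e 0 = 0 := by
    have hsum : ∑ i ∈ range N, e (i + 1) = 0 := by
      simp only [e, Pi.sub_apply, sum_sub_distrib, sum_range_equilibriumDeviation,
        sum_range_spacingDeviation (by simpa using hper 0)]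
      ring
    rw [sum_congr rfl fun (i : ℕ) _ => hconst (i + 1), sum_const, card_range, nsmul_eq_mul] at hsum
    exact (mul_eq_zero.1 hsum).resolve_left (by positivity)
  funext k
  exact sub_eq_zero.1 ((hconst k).trans he0)

end CircleEquilibrium

section

variable {N : ℕ} (hN : 0 < N) (L g : ℝ)
include hN

theorem equilibriumConfig_add_period (k : ℤ) :
    equilibriumConfig N L g (k + N) = equilibriumConfig N L g k + L := by
  simp only [equilibriumConfig, Int.add_emod_right]
  push_cast
  field_simp
  ring

theorem spacingDeviation_equilibriumConfig :
    spacingDeviation N L (equilibriumConfig N L g) = equilibriumDeviation N g := by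
  funext k
  have h := congrArg (Int.cast : ℤ → ℝ) (Int.emod_sub_emod_sub_one (N := N) (by positivity) k)
  push_cast at h
  simp only [spacingDeviation, equilibriumConfig, equilibriumDeviation]
  split_ifs at h with hk
  · rw [Int.emod_eq_zero_of_dvd hk] at h ⊢
    rw [show (((k - 1) % N : ℤ) : ℝ) = N - 1 by push_cast at h; linarith]
    push_cast
    ring
  · rw [show ((k % N : ℤ) : ℝ) = ((k - 1) % N : ℤ) + 1 by linarith]
    push_cast
    ring

theorem circleConfig_equilibriumConfig (hg : 0 ≤ g) (hgL : g * (N - 1) / 2 < L / N) :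
    CircleConfig N L (equilibriumConfig N L g) := by
  refine ⟨by simp [equilibriumConfig], equilibriumConfig_add_period hN L g, fun k => ?_⟩
  have h := congrFun (spacingDeviation_equilibriumConfig hN L g) (k + 1)
  simp only [spacingDeviation, equilibriumDeviation, add_sub_cancel_right] at h
  have : (0 : ℝ) ≤ ((k % N : ℤ) : ℝ) := by exact_mod_cast Int.emod_nonneg k (by positivity)
  nlinarith

theorem circleEquilibrium_equilibriumConfig {ω f : ℝ} (hω : ω ≠ 0) :
    CircleEquilibrium N L ω f (f / N) (equilibriumConfig N L (f / (N * ω ^ 2))) := by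
  rw [circleEquilibrium_iff hN hω, spacingDeviation_equilibriumConfig hN]
  exact equilibriumDeviation_add_one_sub hN _

end

theorem stability_condition_iff {N : ℕ} (hN : 2 ≤ N) {L ω f : ℝ} (hL : 0 < L) (hω : ω ≠ 0) :
    f / (2 * ω ^ 2 * L) < 1 / (N * (1 - 1 / N)) ↔ f / (N * ω ^ 2) * (N - 1) / 2 < L / N := by
  have hN1 : (1 : ℝ) < N := by exact_mod_cast hN
  have : (N : ℝ) * (1 - 1 / N) = N - 1 := by field_simp
  rw [this, div_lt_div_iff₀ (by positivity) (by linarith), div_lt_div_iff₀ (by positivity)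
    (by linarith)]
  field_simp
  rw [div_lt_iff₀ (by positivity)]
  constructor <;> intro h <;> linarith

theorem stmt0_general (N : ℕ) (hN : 2 ≤ N) (L ω f φ : ℝ)
    (hL : 0 < L) (hω : 0 < ω) (hf : 0 < f) :
    -- existence of an equilibrium configuration iff the two conditions hold
    ((∃ x : ℤ → ℝ, CircleConfig N L x ∧ CircleEquilibrium N L ω f φ x) ↔
      (φ = f / N ∧ f / (2 * ω ^ 2 * L) < 1 / (N * (1 - 1 / N)))) ∧
    -- uniqueness
    (∀ x y : ℤ → ℝ, CircleConfig N L x → CircleEquilibrium N L ω f φ x →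
      CircleConfig N L y → CircleEquilibrium N L ω f φ y → x = y) ∧
    -- explicit form of the deviations ε_k, where x k - x (k-1) = L/N + ε_k/N²
    (∀ x : ℤ → ℝ, CircleConfig N L x → CircleEquilibrium N L ω f φ x →
      (∀ k : ℕ, 1 ≤ k → k < N →
        (x (k : ℤ) - x ((k : ℤ) - 1) - L / N) * (N : ℝ) ^ 2 =
          -(f * N * (N - 1)) / (2 * ω ^ 2) + ((k : ℝ) - 1) * (f * N / ω ^ 2)) ∧
      (x (N : ℤ) - x ((N : ℤ) - 1) - L / N) * (N : ℝ) ^ 2 =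
        f * N * (N - 1) / (2 * ω ^ 2)) := by
  have hN0 : 0 < N := by omega
  have hω0 : ω ≠ 0 := hω.ne'
  refine ⟨⟨?_, ?_⟩, ?_, ?_⟩
  · rintro ⟨x, ⟨hx0, hper, hmono⟩, he⟩
    refine ⟨he.phi_eq hN0 hper, (stability_condition_iff hN hL hω0).2 ?_⟩
    have h1 := congrFun (he.spacingDeviation_eq hN0 hper hω0) 1
    rw [equilibriumDeviation_of_mem_Icc _ ⟨le_rfl, by omega⟩, spacingDeviation] at h1
    have h01 := hmono 0
    norm_num [hx0] at h1 h01
    linarith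
  · rintro ⟨rfl, hstab⟩
    exact ⟨_, circleConfig_equilibriumConfig hN0 L _ (by positivity)
      ((stability_condition_iff hN hL hω0).1 hstab), circleEquilibrium_equilibriumConfig hN0 L hω0⟩
  · rintro x y ⟨hx0, hxper, -⟩ hx ⟨hy0, hyper, -⟩ hy
    exact eq_of_spacingDeviation_eq (hx0.trans hy0.symm)
      ((hx.spacingDeviation_eq hN0 hxper hω0).trans (hy.spacingDeviation_eq hN0 hyper hω0).symm)
  · rintro x ⟨-, hper, -⟩ hx
    have hdev (k : ℤ) (hk : k ∈ Set.Icc 1 (N : ℤ)) :=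
      (congrFun (hx.spacingDeviation_eq hN0 hper hω0) k).trans (equilibriumDeviation_of_mem_Icc _ hk)
    refine ⟨fun k hk1 hkN => ?_, ?_⟩
    · rw [← spacingDeviation, hdev k ⟨by exact_mod_cast hk1, by exact_mod_cast hkN.le⟩]
      push_cast
      field_simp
      ring
    · rw [← spacingDeviation, hdev N ⟨by exact_mod_cast hN0, le_rfl⟩]
      push_cast
      field_simp
      ring

theorem stmt0 (N : ℕ) (hN : 2 ≤ N) (L ω f φ : ℝ)
    (hL : 0 < L) (hω : 0 < ω) (hf : 0 < f) (hφ : 0 < φ) :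
    -- existence of an equilibrium configuration iff the two conditions hold
    ((∃ x : ℤ → ℝ, CircleConfig N L x ∧ CircleEquilibrium N L ω f φ x) ↔
      (φ = f / N ∧ f / (2 * ω ^ 2 * L) < 1 / (N * (1 - 1 / N)))) ∧
    -- uniqueness
    (∀ x y : ℤ → ℝ, CircleConfig N L x → CircleEquilibrium N L ω f φ x →
      CircleConfig N L y → CircleEquilibrium N L ω f φ y → x = y) ∧
    -- explicit form of the deviations ε_k, where x k - x (k-1) = L/N + ε_k/N²
    (∀ x : ℤ → ℝ, CircleConfig N L x → CircleEquilibrium N L ω f φ x →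
      (∀ k : ℕ, 1 ≤ k → k < N →
        (x (k : ℤ) - x ((k : ℤ) - 1) - L / N) * (N : ℝ) ^ 2 =
          -(f * N * (N - 1)) / (2 * ω ^ 2) + ((k : ℝ) - 1) * (f * N / ω ^ 2)) ∧
      (x (N : ℤ) - x ((N : ℤ) - 1) - L / N) * (N : ℝ) ^ 2 =
        f * N * (N - 1) / (2 * ω ^ 2)) :=
  stmt0_general N hN L ω f φ hL hω hf
end

section
/- In the setting of a chain of N+1 particles with x_N ≡ L fixed and potential energy U = −f x_0 + (ω₀²/2) x_0² + (ω₁²/2) Σ_{i=1}^{N} (x_i − x_{i−1} − a)², the unique equilibrium configuration satisfies the natural order 0 ≤ x_0 < x_1 < ... < x_N = L if and only if ω₁²(a − L/N) ≤ f < ω₀²L + ω₁²a. -/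
/-!
The equilibrium is an arithmetic progression `x_k = x_0 + k d` whose denominator
`ω₁² + ω₀² N` is positive, so the natural order splits into two sign conditions:
`0 ≤ x_0` is the lower bound on `f` and `0 < d` the upper one, while `x_N = L` holds for every `f`.
-/

lemma forall_lt_lt_succ_iff_of_affine {X : ℕ → ℝ} {c d : ℝ} (hX : ∀ k, X k = c + k * d)
    {N : ℕ} (hN : 1 ≤ N) : (∀ k < N, X k < X (k + 1)) ↔ 0 < d := by
  have hstep (k : ℕ) : X (k + 1) - X k = d := by
    rw [hX, hX]
    push_cast
    ring
  refine ⟨fun h ↦ ?_, fun hd k _ ↦ ?_⟩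
  · linarith [h 0 hN, hstep 0]
  · linarith [hstep k]

lemma mul_sub_div_le_iff {K : Type*} [Field K] [LinearOrder K] [IsStrictOrderedRing K]
    {n : K} (hn : 0 < n) (w a L f : K) :
    w * (a - L / n) ≤ f ↔ 0 ≤ w * (L - n * a) + n * f := by
  rw [← sub_nonneg, ← mul_nonneg_iff_of_pos_left hn]
  constructor <;> intro h <;> convert h using 1 <;> field_simp <;> ring

theorem stmt2_general (N : ℕ) (hN : 1 ≤ N) (L a f ω0 ω1 : ℝ)
    (hω1 : 0 < ω1)
    (X : ℕ → ℝ)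
    -- the unique equilibrium configuration of the chain with particle N fixed at L
    (hX : ∀ k, X k =
      (ω1 ^ 2 * (L - N * a) + N * f) / (ω1 ^ 2 + ω0 ^ 2 * N)
        + k * ((ω0 ^ 2 * L + ω1 ^ 2 * a - f) / (ω1 ^ 2 + ω0 ^ 2 * N))) :
    -- natural order 0 ≤ x_0 < x_1 < … < x_N = L holds iff ω₁²(a − L/N) ≤ f < ω₀²L + ω₁²a
    (0 ≤ X 0 ∧ (∀ k < N, X k < X (k + 1)) ∧ X N = L) ↔
      (ω1 ^ 2 * (a - L / N) ≤ f ∧ f < ω0 ^ 2 * L + ω1 ^ 2 * a) := by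
  have hNpos : (0 : ℝ) < N := by exact_mod_cast hN
  have hD : 0 < ω1 ^ 2 + ω0 ^ 2 * N := by positivity
  have hX0 : 0 ≤ X 0 ↔ 0 ≤ ω1 ^ 2 * (L - N * a) + N * f := by
    rw [hX, Nat.cast_zero, zero_mul, add_zero, le_div_iff₀ hD, zero_mul]
  have hXN : X N = L := by
    rw [hX]
    field_simp
    ring
  rw [hX0, forall_lt_lt_succ_iff_of_affine hX hN, div_pos_iff_of_pos_right hD, sub_pos,
    mul_sub_div_le_iff hNpos]
  simp only [hXN, and_true]

theorem stmt2 (N : ℕ) (hN : 1 ≤ N) (L a f ω0 ω1 : ℝ)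
    (hL : 0 < L) (ha : 0 < a) (hω0 : 0 < ω0) (hω1 : 0 < ω1)
    (X : ℕ → ℝ)
    -- the unique equilibrium configuration of the chain with particle N fixed at L
    (hX : ∀ k, X k =
      (ω1 ^ 2 * (L - N * a) + N * f) / (ω1 ^ 2 + ω0 ^ 2 * N)
        + k * ((ω0 ^ 2 * L + ω1 ^ 2 * a - f) / (ω1 ^ 2 + ω0 ^ 2 * N))) :
    -- natural order 0 ≤ x_0 < x_1 < … < x_N = L holds iff ω₁²(a − L/N) ≤ f < ω₀²L + ω₁²a
    (0 ≤ X 0 ∧ (∀ k < N, X k < X (k + 1)) ∧ X N = L) ↔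
      (ω1 ^ 2 * (a - L / N) ≤ f ∧ f < ω0 ^ 2 * L + ω1 ^ 2 * a) :=
  stmt2_general N hN L a f ω0 ω1 hω1 X hX
end

section
/- For the chain of N+1 free particles with potential energy U = −f x_0 + (ω₀²/2) x_0² + (ω₀²/2)(x_N − L)² + (ω₁²/2) Σ_{i=1}^{N} (x_i − x_{i−1} − a)², the unique equilibrium configuration satisfies 0 ≤ x_0 < x_1 < ... < x_N ≤ L if and only if L ≥ aN and −ω₁²(L − aN)/(N + ω₁²ω₀^{−2}) ≤ f ≤ ω₀²(L − Na). -/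
/-!
The equilibrium is affine in the particle index, `x_k = x_0 + k d`, so the ordering
`x_0 < x_1 < … < x_N` only asks for `d > 0`. Clearing the positive denominators,
`x_0 ≥ 0` and `x_N ≤ L` become exactly the lower and the upper bound on `f`, and these two
bounds are compatible only if `L ≥ aN`. Conversely the upper bound `f ≤ ω₀²(L - Na)` already
gives `d > 0`, because `ω₀²Na + 2ω₁²a > 0`.
-/

theorem nonneg_of_neg_mul_div_le_mul {c m p t : ℝ} (hc : 0 ≤ c) (hm : 0 < m) (hp : 0 < p)
    (h : -(c * t) / m ≤ p * t) : 0 ≤ t := by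
  rw [div_le_iff₀ hm, neg_le_iff_add_nonneg] at h
  have hpos : 0 < p * m + c := by positivity
  exact nonneg_of_mul_nonneg_right (by linarith) hpos

namespace HarmonicChain

variable (N : ℕ) (L a f ω0 ω1 : ℝ)

noncomputable def equilibrium (k : ℕ) : ℝ :=
  (ω1 ^ 2 * (L + N * (f / ω1 ^ 2 - a)) + ω1 ^ 2 / ω0 ^ 2 * f) / (2 * ω1 ^ 2 + N * ω0 ^ 2)
    + k * ((ω0 ^ 2 * L + 2 * ω1 ^ 2 * a - f) / (2 * ω1 ^ 2 + N * ω0 ^ 2))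

variable {ω0 ω1}

theorem equilibrium_zero (hω0 : ω0 ≠ 0) (hω1 : ω1 ≠ 0) :
    equilibrium N L a f ω0 ω1 0 =
      (f * (N + ω1 ^ 2 / ω0 ^ 2) + ω1 ^ 2 * (L - a * N)) / (2 * ω1 ^ 2 + N * ω0 ^ 2) := by
  simp only [equilibrium, CharP.cast_eq_zero, zero_mul, add_zero]
  field_simp
  ring

theorem equilibrium_last_sub (hω0 : ω0 ≠ 0) (hω1 : ω1 ≠ 0) :
    equilibrium N L a f ω0 ω1 N - L =
      ω1 ^ 2 * (f - ω0 ^ 2 * (L - N * a)) / ((2 * ω1 ^ 2 + N * ω0 ^ 2) * ω0 ^ 2) := by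
  have hD : 2 * ω1 ^ 2 + N * ω0 ^ 2 ≠ 0 := by positivity
  rw [equilibrium]
  field_simp
  ring

theorem equilibrium_succ_sub (k : ℕ) :
    equilibrium N L a f ω0 ω1 (k + 1) - equilibrium N L a f ω0 ω1 k =
      (ω0 ^ 2 * L + 2 * ω1 ^ 2 * a - f) / (2 * ω1 ^ 2 + N * ω0 ^ 2) := by
  simp only [equilibrium, Nat.cast_succ]
  ring

theorem equilibrium_zero_nonneg_iff (hω0 : 0 < ω0) (hω1 : 0 < ω1) :
    0 ≤ equilibrium N L a f ω0 ω1 0 ↔ -(ω1 ^ 2 * (L - a * N)) / (N + ω1 ^ 2 / ω0 ^ 2) ≤ f := by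
  have hM : (0 : ℝ) < N + ω1 ^ 2 / ω0 ^ 2 := by positivity
  rw [equilibrium_zero N L a f hω0.ne' hω1.ne', le_div_iff₀ (by positivity), zero_mul,
    div_le_iff₀ hM, neg_le_iff_add_nonneg, add_comm]

theorem equilibrium_last_le_iff (hω0 : 0 < ω0) (hω1 : 0 < ω1) :
    equilibrium N L a f ω0 ω1 N ≤ L ↔ f ≤ ω0 ^ 2 * (L - N * a) := by
  rw [← sub_nonpos, equilibrium_last_sub N L a f hω0.ne' hω1.ne',
    div_le_iff₀ (by positivity), zero_mul, ← mul_zero (ω1 ^ 2),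
    mul_le_mul_iff_of_pos_left (by positivity), sub_nonpos]

theorem equilibrium_strictMono (ha : 0 < a) (hω0 : 0 < ω0) (hω1 : 0 < ω1)
    (hf : f ≤ ω0 ^ 2 * (L - N * a)) : StrictMono (equilibrium N L a f ω0 ω1) := by
  refine strictMono_nat_of_lt_succ fun k => sub_pos.mp ?_
  rw [equilibrium_succ_sub]
  have : 0 ≤ ω0 ^ 2 * (N * a) := by positivity
  have : 0 < ω1 ^ 2 * a := by positivity
  exact div_pos (by linarith) (by positivity)

end HarmonicChain

open HarmonicChain

theorem stmt5_general (N : ℕ) (L a f ω0 ω1 : ℝ)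
    (ha : 0 < a) (hω0 : 0 < ω0) (hω1 : 0 < ω1)
    (X : ℕ → ℝ)
    -- the unique equilibrium configuration of the free chain with force f on particle 0
    (hX : ∀ k, X k =
      (ω1 ^ 2 * (L + N * (f / ω1 ^ 2 - a)) + ω1 ^ 2 / ω0 ^ 2 * f)
          / (2 * ω1 ^ 2 + N * ω0 ^ 2)
        + k * ((ω0 ^ 2 * L + 2 * ω1 ^ 2 * a - f) / (2 * ω1 ^ 2 + N * ω0 ^ 2))) :
    -- 0 ≤ x_0 < x_1 < … < x_N ≤ L iff L ≥ aN and the bounds on f hold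
    (0 ≤ X 0 ∧ (∀ k < N, X k < X (k + 1)) ∧ X N ≤ L) ↔
      (a * N ≤ L ∧
        -(ω1 ^ 2 * (L - a * N)) / (N + ω1 ^ 2 / ω0 ^ 2) ≤ f ∧
        f ≤ ω0 ^ 2 * (L - N * a)) := by
  obtain rfl : X = equilibrium N L a f ω0 ω1 := funext hX
  rw [equilibrium_zero_nonneg_iff N L a f hω0 hω1, equilibrium_last_le_iff N L a f hω0 hω1]
  constructor
  · rintro ⟨hlower, -, hupper⟩
    have hM : (0 : ℝ) < N + ω1 ^ 2 / ω0 ^ 2 := by positivity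
    have hLaN : 0 ≤ L - a * N := nonneg_of_neg_mul_div_le_mul (sq_nonneg ω1) hM
      (pow_pos hω0 2) (hlower.trans (by rwa [mul_comm a]))
    exact ⟨sub_nonneg.mp hLaN, hlower, hupper⟩
  · rintro ⟨-, hlower, hupper⟩
    exact ⟨hlower, fun k _ => equilibrium_strictMono N L a f ha hω0 hω1 hupper k.lt_succ_self,
      hupper⟩

theorem stmt5 (N : ℕ) (hN : 1 ≤ N) (L a f ω0 ω1 : ℝ)
    (hL : 0 < L) (ha : 0 < a) (hω0 : 0 < ω0) (hω1 : 0 < ω1)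
    (X : ℕ → ℝ)
    -- the unique equilibrium configuration of the free chain with force f on particle 0
    (hX : ∀ k, X k =
      (ω1 ^ 2 * (L + N * (f / ω1 ^ 2 - a)) + ω1 ^ 2 / ω0 ^ 2 * f)
          / (2 * ω1 ^ 2 + N * ω0 ^ 2)
        + k * ((ω0 ^ 2 * L + 2 * ω1 ^ 2 * a - f) / (2 * ω1 ^ 2 + N * ω0 ^ 2))) :
    -- 0 ≤ x_0 < x_1 < … < x_N ≤ L iff L ≥ aN and the bounds on f hold
    (0 ≤ X 0 ∧ (∀ k < N, X k < X (k + 1)) ∧ X N ≤ L) ↔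
      (a * N ≤ L ∧
        -(ω1 ^ 2 * (L - a * N)) / (N + ω1 ^ 2 / ω0 ^ 2) ≤ f ∧
        f ≤ ω0 ^ 2 * (L - N * a)) :=
  stmt5_general N L a f ω0 ω1 ha hω0 hω1 X hX
end

section
/- For the chain of N+1 free particles with potential energy U = (ω₀²/2) x_0² + (ω₀²/2)(x_N − L)² + (ω₁²/2) Σ_{i=1}^{N} (x_i − x_{i−1} − a)² − f x_0 + f x_N, the unique equilibrium configuration satisfies: x_0 < x_1 < ... < x_N if and only if f < (ω₀²L + 2ω₁²a)/2; x_0 = x_1 = ... = x_N if and only if f = (ω₀²L + 2ω₁²a)/2; and x_0 > x_1 > ... > x_N if and only if f > (ω₀²L + 2ω₁²a)/2. -/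
theorem stmt7 (N : ℕ) (hN : 1 ≤ N) (L a f ω0 ω1 : ℝ)
    (hL : 0 < L) (ha : 0 < a) (hω0 : 0 < ω0) (hω1 : 0 < ω1)
    (X : ℕ → ℝ)
    -- the unique equilibrium configuration of the free chain with force f on particle 0
    -- and force -f on particle N
    (hX : ∀ k, X k =
      ω1 ^ 2 * (L + N * (f / ω1 ^ 2 - a)) / (2 * ω1 ^ 2 + N * ω0 ^ 2)
        + k * ((ω0 ^ 2 * L + 2 * ω1 ^ 2 * a - 2 * f) / (2 * ω1 ^ 2 + N * ω0 ^ 2))) :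
    -- trichotomy
    ((∀ k < N, X k < X (k + 1)) ↔ f < (ω0 ^ 2 * L + 2 * ω1 ^ 2 * a) / 2) ∧
    ((∀ k ≤ N, X k = X 0) ↔ f = (ω0 ^ 2 * L + 2 * ω1 ^ 2 * a) / 2) ∧
    ((∀ k < N, X (k + 1) < X k) ↔ (ω0 ^ 2 * L + 2 * ω1 ^ 2 * a) / 2 < f) := by
  have hDpos : (0:ℝ) < 2 * ω1 ^ 2 + N * ω0 ^ 2 := by positivity
  set d := (ω0 ^ 2 * L + 2 * ω1 ^ 2 * a - 2 * f) / (2 * ω1 ^ 2 + N * ω0 ^ 2) with hd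
  have diff : ∀ k : ℕ, X k = X 0 + k * d := by
    intro k; rw [hX, hX]; push_cast; ring
  have hd0 : 0 < d ↔ f < (ω0 ^ 2 * L + 2 * ω1 ^ 2 * a) / 2 := by
    rw [hd, div_pos_iff]
    constructor
    · rintro (⟨h, _⟩ | ⟨_, h⟩) <;> linarith
    · intro h; left; exact ⟨by linarith, hDpos⟩
  have hd1 : d = 0 ↔ f = (ω0 ^ 2 * L + 2 * ω1 ^ 2 * a) / 2 := by
    rw [hd, div_eq_zero_iff]
    constructor
    · rintro (h | h) <;> [linarith; linarith]
    · intro h; left; linarith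
  have hd2 : d < 0 ↔ (ω0 ^ 2 * L + 2 * ω1 ^ 2 * a) / 2 < f := by
    rw [hd, div_neg_iff]
    constructor
    · rintro (⟨_, h⟩ | ⟨h, _⟩) <;> linarith
    · intro h; right; exact ⟨by linarith, hDpos⟩
  refine ⟨⟨fun h => ?_, fun h k _ => ?_⟩, ⟨fun h => ?_, fun h k _ => ?_⟩,
    ⟨fun h => ?_, fun h k _ => ?_⟩⟩
  · have := h 0 hN
    rw [hd0.symm] at *
    have h0 := diff 0; have h1 := diff 1
    push_cast at h0 h1; linarith
  · rw [hd0.symm] at h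
    have h0 := diff k; have h1 := diff (k + 1)
    push_cast at h0 h1; linarith
  · have := h 1 hN
    rw [hd1.symm] at *
    have h0 := diff 0; have h1 := diff 1
    push_cast at h0 h1; linarith
  · rw [hd1.symm] at h
    have h0 := diff k
    rw [h0, h]; ring
  · have := h 0 hN
    rw [hd2.symm] at *
    have h0 := diff 0; have h1 := diff 1
    push_cast at h0 h1; linarith
  · rw [hd2.symm] at h
    have h0 := diff k; have h1 := diff (k + 1)
    push_cast at h0 h1; linarith
end

section
/- Consider N+1 particles with x_N ≡ L fixed and potential energy U = (ω₀²/2) x_0² + (ω₁²/2) Σ_{i=1}^{N} (x_i − x_{i−1} − a)² − f(x_0 + x_1 + ... + x_{N−1}), where a constant force f acts on each free particle, ω₀, ω₁ > 0, a > 0, L > 0. Then: (1) the equilibrium configuration exists and is unique, given by x_0 = ω₁²(L + N(N+1)f/(2ω₁²) − Na)/(ω₁² + ω₀²N) and x_k − x_{k−1} = −fk/ω₁² + (ω₀²(L + N(N+1)f/(2ω₁²)) + aω₁²)/(ω₁² + ω₀²N) for k = 1, ..., N−1; (2) this equilibrium satisfies 0 ≤ x_0 < x_1 < ... < x_N = L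 if and only if −2ω₁²(L − aN)/(N(N+1)) ≤ f < 2ω₁²(ω₀²L + aω₁²)/(N(2ω₁² + ω₀²(N−1))). -/
/-- Equilibrium for the chain of `N+1` particles with particle `N` rigidly fixed:
particle `0` is harmonically attached to the origin with frequency `ω0`, nearest
neighbors interact harmonically with frequency `ω1` and natural spacing `a`, and the
constant force `f` acts on each free particle `0, …, N-1`. -/
def IsEquil8 (N : ℕ) (a f ω0 ω1 : ℝ) (x : ℕ → ℝ) : Prop :=
  (-(ω0 ^ 2) * x 0 + ω1 ^ 2 * (x 1 - x 0 - a) + f = 0) ∧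
  (∀ k, 0 < k → k < N →
    ω1 ^ 2 * (x (k + 1) - x k - a) - ω1 ^ 2 * (x k - x (k - 1) - a) + f = 0)

/-!
The interior equations say that the spacings `x (k+1) - x k` decrease by `f / ω1²` at every step,
so an equilibrium is the quadratic profile determined by `x 0` and its first spacing, and the
balance of forces on particle `0` expresses that spacing through `x 0`. The condition `x N = L`
is then an affine equation in `x 0` with slope `(ω1² + ω0² N) / ω1² > 0`: this gives existence,
uniqueness and the explicit form. The spacings form an arithmetic progression, so they are all
positive iff the first and the last one are; the last one yields the upper bound on `f`,
`x 0 ≥ 0` the lower one, and together these already force the first spacing to be positive.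
-/

section ChainProfile

variable {K : Type*} [Field K] [CharZero K]

noncomputable def chainProfile (x₀ c δ : K) (k : ℕ) : K :=
  x₀ + k * c - k * (k - 1) / 2 * δ

@[simp]
lemma chainProfile_zero (x₀ c δ : K) : chainProfile x₀ c δ 0 = x₀ := by
  simp [chainProfile]

@[simp]
lemma chainProfile_succ_sub (x₀ c δ : K) (k : ℕ) :
    chainProfile x₀ c δ (k + 1) - chainProfile x₀ c δ k = c - k * δ := by
  simp only [chainProfile]
  push_cast
  ring

lemma eq_chainProfile_of_sub_eq {x : ℕ → K} {N : ℕ} {c δ : K}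
    (hgap : ∀ k < N, x (k + 1) - x k = c - k * δ) :
    ∀ k ≤ N, x k = chainProfile (x 0) c δ k := by
  intro k hk
  induction k with
  | zero => simp
  | succ k ih =>
    rw [← sub_add_cancel (x (k + 1)) (x k), hgap k hk, ih (by omega),
      ← chainProfile_succ_sub (x 0) c δ k]
    ring

end ChainProfile

lemma sub_succ_eq_of_sub_eq_sub_sub {R : Type*} [CommRing R] {x : ℕ → R} {N : ℕ} {δ : R}
    (h : ∀ k, 0 < k → k < N → x (k + 1) - x k = x k - x (k - 1) - δ) :
    ∀ k < N, x (k + 1) - x k = x 1 - x 0 - k * δ := by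
  intro k hk
  induction k with
  | zero => simp
  | succ k ih =>
    rw [h (k + 1) k.succ_pos hk, Nat.add_sub_cancel, ih (by omega)]
    push_cast
    ring

lemma forall_lt_pos_sub_mul_iff {K : Type*} [Field K] [LinearOrder K] [IsStrictOrderedRing K]
    {N : ℕ} (hN : 1 ≤ N) (c δ : K) :
    (∀ k < N, 0 < c - k * δ) ↔ 0 < c ∧ 0 < c - (N - 1) * δ := by
  have hN' : ((N - 1 : ℕ) : K) = N - 1 := by push_cast [Nat.cast_sub hN]; ring
  refine ⟨fun h => ⟨by simpa using h 0 (by omega), hN' ▸ h (N - 1) (by omega)⟩, ?_⟩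
  rintro ⟨hfirst, hlast⟩ k hk
  have hkN : (k : K) ≤ N - 1 := by
    rw [← hN']
    exact_mod_cast Nat.le_sub_one_of_lt hk
  rcases le_total 0 δ with hδ | hδ
  · nlinarith
  · nlinarith [(Nat.cast_nonneg k : (0 : K) ≤ k)]

section Equilibrium

variable {N : ℕ} {L a f ω0 ω1 : ℝ}

/-- The first spacing `x 1 - x 0` forced by the balance of forces on particle `0`. -/
noncomputable def startGap (a f ω0 ω1 x₀ : ℝ) : ℝ :=
  a + (ω0 ^ 2 * x₀ - f) / ω1 ^ 2

noncomputable def equilibriumStart (N : ℕ) (L a f ω0 ω1 : ℝ) : ℝ :=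
  ω1 ^ 2 * (L + N * (N + 1) * f / (2 * ω1 ^ 2) - N * a) / (ω1 ^ 2 + ω0 ^ 2 * N)

lemma IsEquil8.eq_chainProfile (hω1 : ω1 ≠ 0) {x : ℕ → ℝ} (hx : IsEquil8 N a f ω0 ω1 x) :
    ∀ k ≤ N, x k = chainProfile (x 0) (startGap a f ω0 ω1 (x 0)) (f / ω1 ^ 2) k := by
  have hfirst : x 1 - x 0 = startGap a f ω0 ω1 (x 0) := by
    rw [startGap]
    field_simp
    linear_combination hx.1
  refine eq_chainProfile_of_sub_eq fun k hk => hfirst ▸ sub_succ_eq_of_sub_eq_sub_sub ?_ k hk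
  intro k hk hkN
  field_simp
  linear_combination hx.2 k hk hkN

lemma isEquil8_chainProfile (hω1 : ω1 ≠ 0) (x₀ : ℝ) :
    IsEquil8 N a f ω0 ω1 (chainProfile x₀ (startGap a f ω0 ω1 x₀) (f / ω1 ^ 2)) := by
  refine ⟨?_, fun k hk _ => ?_⟩
  · rw [← zero_add 1, chainProfile_succ_sub, chainProfile_zero, startGap]
    field_simp
    ring
  · obtain ⟨j, rfl⟩ := Nat.exists_eq_add_of_le' hk
    rw [Nat.add_sub_cancel, chainProfile_succ_sub, chainProfile_succ_sub]
    field_simp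
    push_cast
    ring

lemma chainProfile_startGap_eq_iff (hω1 : ω1 ≠ 0) (hD : ω1 ^ 2 + ω0 ^ 2 * N ≠ 0) (x₀ : ℝ) :
    chainProfile x₀ (startGap a f ω0 ω1 x₀) (f / ω1 ^ 2) N = L ↔
      x₀ = equilibriumStart N L a f ω0 ω1 := by
  have hend : chainProfile x₀ (startGap a f ω0 ω1 x₀) (f / ω1 ^ 2) N =
      x₀ * (ω1 ^ 2 + ω0 ^ 2 * N) / ω1 ^ 2 + N * a - N * (N + 1) * f / (2 * ω1 ^ 2) := by
    simp only [chainProfile, startGap]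
    field_simp
    ring
  rw [hend, equilibriumStart, eq_div_iff hD]
  constructor <;> intro h <;> field_simp at h ⊢ <;> linear_combination h

lemma startGap_equilibriumStart (hω1 : ω1 ≠ 0) (hD : ω1 ^ 2 + ω0 ^ 2 * N ≠ 0) :
    startGap a f ω0 ω1 (equilibriumStart N L a f ω0 ω1) =
      (ω0 ^ 2 * (L + N * (N + 1) * f / (2 * ω1 ^ 2)) + a * ω1 ^ 2) / (ω1 ^ 2 + ω0 ^ 2 * N)
        - f / ω1 ^ 2 := by
  rw [startGap, equilibriumStart]
  field_simp
  ring

lemma equilibriumStart_nonneg_iff (hN : 1 ≤ N) (hω1 : ω1 ≠ 0) :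
    0 ≤ equilibriumStart N L a f ω0 ω1 ↔ -(2 * ω1 ^ 2 * (L - a * N)) / (N * (N + 1)) ≤ f := by
  have hω1sq : 0 < ω1 ^ 2 := by positivity
  have hnum : L + N * (N + 1) * f / (2 * ω1 ^ 2) - N * a =
      (f * (N * (N + 1)) - -(2 * ω1 ^ 2 * (L - a * N))) / (2 * ω1 ^ 2) := by
    field_simp
    ring
  rw [equilibriumStart, le_div_iff₀ (by positivity), zero_mul, mul_nonneg_iff_of_pos_left hω1sq,
    hnum, le_div_iff₀ (by positivity), zero_mul, sub_nonneg, div_le_iff₀ (by positivity)]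

lemma startGap_equilibriumStart_sub_pos_iff (hN : 1 ≤ N) (hω1 : ω1 ≠ 0) :
    0 < startGap a f ω0 ω1 (equilibriumStart N L a f ω0 ω1) - (N - 1) * (f / ω1 ^ 2) ↔
      f < 2 * ω1 ^ 2 * (ω0 ^ 2 * L + a * ω1 ^ 2) / (N * (2 * ω1 ^ 2 + ω0 ^ 2 * ((N : ℝ) - 1))) := by
  have hNR : (1 : ℝ) ≤ N := by exact_mod_cast hN
  have hD : 0 < ω1 ^ 2 + ω0 ^ 2 * N := by positivity
  have hgap : startGap a f ω0 ω1 (equilibriumStart N L a f ω0 ω1) - (N - 1) * (f / ω1 ^ 2) =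
      (2 * ω1 ^ 2 * (ω0 ^ 2 * L + a * ω1 ^ 2) - f * (N * (2 * ω1 ^ 2 + ω0 ^ 2 * ((N : ℝ) - 1))))
        / (2 * ω1 ^ 2 * (ω1 ^ 2 + ω0 ^ 2 * N)) := by
    rw [startGap_equilibriumStart hω1 hD.ne']
    field_simp
    ring
  rw [hgap, div_pos_iff_of_pos_right (by positivity), sub_pos, lt_div_iff₀ (by positivity)]

lemma startGap_pos_of_sub_pos (ha : 0 < a) {x₀ m : ℝ} (hx₀ : 0 ≤ x₀) (hm : 0 ≤ m)
    (hlast : 0 < startGap a f ω0 ω1 x₀ - m * (f / ω1 ^ 2)) : 0 < startGap a f ω0 ω1 x₀ := by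
  rcases le_total f 0 with hf | hf
  · rw [startGap]
    have : 0 ≤ ω0 ^ 2 * x₀ - f := by nlinarith [sq_nonneg ω0]
    positivity
  · nlinarith [mul_nonneg hm (div_nonneg hf (sq_nonneg ω1))]

end Equilibrium

theorem stmt8_general (N : ℕ) (hN : 1 ≤ N) (L a f ω0 ω1 : ℝ)
    (ha : 0 < a) (hω1 : 0 < ω1) :
    -- existence
    (∃ x : ℕ → ℝ, x N = L ∧ IsEquil8 N a f ω0 ω1 x) ∧
    -- uniqueness
    (∀ x y : ℕ → ℝ, x N = L → IsEquil8 N a f ω0 ω1 x →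
      y N = L → IsEquil8 N a f ω0 ω1 y → ∀ k ≤ N, x k = y k) ∧
    (∀ x : ℕ → ℝ, x N = L → IsEquil8 N a f ω0 ω1 x →
      -- explicit form
      (x 0 = ω1 ^ 2 * (L + N * (N + 1) * f / (2 * ω1 ^ 2) - N * a)
              / (ω1 ^ 2 + ω0 ^ 2 * N) ∧
       ∀ k, 1 ≤ k → k ≤ N - 1 →
         x k - x (k - 1) = -(f * k) / ω1 ^ 2 +
           (ω0 ^ 2 * (L + N * (N + 1) * f / (2 * ω1 ^ 2)) + a * ω1 ^ 2)
             / (ω1 ^ 2 + ω0 ^ 2 * N)) ∧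
      -- natural ordering criterion
      ((0 ≤ x 0 ∧ ∀ k < N, x k < x (k + 1)) ↔
        (-(2 * ω1 ^ 2 * (L - a * N)) / (N * (N + 1)) ≤ f ∧
         f < 2 * ω1 ^ 2 * (ω0 ^ 2 * L + a * ω1 ^ 2)
               / (N * (2 * ω1 ^ 2 + ω0 ^ 2 * ((N : ℝ) - 1))))) ) := by
  have hω1' := hω1.ne'
  have hD : ω1 ^ 2 + ω0 ^ 2 * N ≠ 0 := by positivity
  set x₀ := equilibriumStart N L a f ω0 ω1
  set c := startGap a f ω0 ω1 x₀
  have profile : ∀ x, x N = L → IsEquil8 N a f ω0 ω1 x →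
      ∀ k ≤ N, x k = chainProfile x₀ c (f / ω1 ^ 2) k := by
    intro x hxN hx k hk
    have hx₀ : x 0 = x₀ := (chainProfile_startGap_eq_iff hω1' hD _).1 <| by
      rw [← hx.eq_chainProfile hω1' N le_rfl, hxN]
    rw [hx.eq_chainProfile hω1' k hk, hx₀]
  refine ⟨⟨_, (chainProfile_startGap_eq_iff hω1' hD x₀).2 rfl, isEquil8_chainProfile hω1' x₀⟩,
    fun x y hxN hx hyN hy k hk => by rw [profile x hxN hx k hk, profile y hyN hy k hk],
    fun x hxN hx => ?_⟩
  have hx₀ : x 0 = x₀ := by simpa using profile x hxN hx 0 N.zero_le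
  have hgap : ∀ k < N, x (k + 1) - x k = c - k * (f / ω1 ^ 2) := fun k hk => by
    rw [profile x hxN hx k hk.le, profile x hxN hx (k + 1) hk, chainProfile_succ_sub]
  refine ⟨⟨hx₀, fun k hk _ => ?_⟩, ?_⟩
  · obtain ⟨j, rfl⟩ := Nat.exists_eq_add_of_le' hk
    rw [Nat.add_sub_cancel, hgap j (by omega), show c = _ from startGap_equilibriumStart hω1' hD]
    push_cast
    ring
  · have hmono : (∀ k < N, x k < x (k + 1)) ↔ ∀ k < N, 0 < c - k * (f / ω1 ^ 2) :=
      forall₂_congr fun k hk => by rw [← sub_pos, hgap k hk]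
    rw [hx₀, hmono, forall_lt_pos_sub_mul_iff hN, equilibriumStart_nonneg_iff hN hω1',
      ← startGap_equilibriumStart_sub_pos_iff hN hω1']
    have hN1 : (0 : ℝ) ≤ N - 1 := by simpa using (Nat.one_le_cast.2 hN : (1 : ℝ) ≤ N)
    refine ⟨fun ⟨h₀, _, hlast⟩ => ⟨h₀, hlast⟩, fun ⟨h₀, hlast⟩ => ⟨h₀, ?_, hlast⟩⟩
    exact startGap_pos_of_sub_pos ha ((equilibriumStart_nonneg_iff hN hω1').2 h₀) hN1 hlast

theorem stmt8 (N : ℕ) (hN : 1 ≤ N) (L a f ω0 ω1 : ℝ)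
    (hL : 0 < L) (ha : 0 < a) (hω0 : 0 < ω0) (hω1 : 0 < ω1) :
    -- existence
    (∃ x : ℕ → ℝ, x N = L ∧ IsEquil8 N a f ω0 ω1 x) ∧
    -- uniqueness
    (∀ x y : ℕ → ℝ, x N = L → IsEquil8 N a f ω0 ω1 x →
      y N = L → IsEquil8 N a f ω0 ω1 y → ∀ k ≤ N, x k = y k) ∧
    (∀ x : ℕ → ℝ, x N = L → IsEquil8 N a f ω0 ω1 x →
      -- explicit form
      (x 0 = ω1 ^ 2 * (L + N * (N + 1) * f / (2 * ω1 ^ 2) - N * a)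
              / (ω1 ^ 2 + ω0 ^ 2 * N) ∧
       ∀ k, 1 ≤ k → k ≤ N - 1 →
         x k - x (k - 1) = -(f * k) / ω1 ^ 2 +
           (ω0 ^ 2 * (L + N * (N + 1) * f / (2 * ω1 ^ 2)) + a * ω1 ^ 2)
             / (ω1 ^ 2 + ω0 ^ 2 * N)) ∧
      -- natural ordering criterion
      ((0 ≤ x 0 ∧ ∀ k < N, x k < x (k + 1)) ↔
        (-(2 * ω1 ^ 2 * (L - a * N)) / (N * (N + 1)) ≤ f ∧
         f < 2 * ω1 ^ 2 * (ω0 ^ 2 * L + a * ω1 ^ 2)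
               / (N * (2 * ω1 ^ 2 + ω0 ^ 2 * ((N : ℝ) - 1))))) ) :=
  stmt8_general N hN L a f ω0 ω1 ha hω1
end

section
/- Consider N+1 free particles with potential energy U = (ω₀²/2) x_0² + (ω₀²/2)(x_N − L)² + (ω₁²/2) Σ_{i=1}^{N} (x_i − x_{i−1} − a)² − f(x_0 + x_1 + ... + x_N), where a constant force f acts on every particle, ω₀, ω₁ > 0, a > 0, L > 0. Then the equilibrium configuration exists, is unique, and is given by x_0 = (ω₁²(L + N(N+1)f/(2ω₁²) − Na) + ω₁²ω₀^{−2}f(N+1))/(2ω₁² + Nω₀²) and x_k − x_{k−1} = −fk/ω₁² + (ω₀²(L + N(N+1)f/(2ω₁²)) + f(N+1) + 2ω₁²a)/(2ω₁² + Nω₀²) for k = 1, ..., N. -/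
/-- Equilibrium for the free chain of `N+1` particles: particle `0` is harmonically
attached to the origin, particle `N` is harmonically attached to `L` (both with
frequency `ω0`), nearest neighbors interact harmonically with frequency `ω1` and natural
spacing `a`, and the constant force `f` acts on every particle. -/
def IsEquil9 (N : ℕ) (L a f ω0 ω1 : ℝ) (x : ℕ → ℝ) : Prop :=
  (-(ω0 ^ 2) * x 0 + ω1 ^ 2 * (x 1 - x 0 - a) + f = 0) ∧
  (∀ k, 0 < k → k < N →
    ω1 ^ 2 * (x (k + 1) - x k - a) - ω1 ^ 2 * (x k - x (k - 1) - a) + f = 0) ∧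
  (-(ω0 ^ 2) * (x N - L) - ω1 ^ 2 * (x N - x (N - 1) - a) + f = 0)

/-- The explicit equilibrium configuration. -/
noncomputable def eqX (N : ℕ) (L a f ω0 ω1 : ℝ) (k : ℕ) : ℝ :=
  (ω1 ^ 2 * (L + N * (N + 1) * f / (2 * ω1 ^ 2) - N * a)
      + ω1 ^ 2 / ω0 ^ 2 * f * (N + 1)) / (2 * ω1 ^ 2 + N * ω0 ^ 2)
  + k * ((ω0 ^ 2 * (L + N * (N + 1) * f / (2 * ω1 ^ 2)) + f * (N + 1)
      + 2 * ω1 ^ 2 * a) / (2 * ω1 ^ 2 + N * ω0 ^ 2))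
  - f * (k * (k + 1) / 2) / ω1 ^ 2

lemma eqX_isEquil (N : ℕ) (hN : 1 ≤ N) (L a f ω0 ω1 : ℝ)
    (hω0 : 0 < ω0) (hω1 : 0 < ω1) :
    IsEquil9 N L a f ω0 ω1 (eqX N L a f ω0 ω1) := by
  obtain ⟨M, rfl⟩ : ∃ M, N = M + 1 := ⟨N - 1, (Nat.succ_pred_eq_of_pos hN).symm⟩
  have h0 : (ω0:ℝ) ≠ 0 := hω0.ne'
  have h1 : (ω1:ℝ) ≠ 0 := hω1.ne'
  have hD : (2 * ω1 ^ 2 + ((M:ℝ) + 1) * ω0 ^ 2) ≠ 0 := by positivity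
  refine ⟨?_, ?_, ?_⟩
  · simp only [eqX]
    push_cast
    field_simp
    ring
  · intro k hk hkN
    obtain ⟨m, rfl⟩ : ∃ m, k = m + 1 := ⟨k - 1, (Nat.succ_pred_eq_of_pos hk).symm⟩
    simp only [eqX, Nat.add_sub_cancel]
    push_cast
    field_simp
    ring
  · simp only [eqX, Nat.add_sub_cancel]
    push_cast
    field_simp
    ring

lemma uniq9 (N : ℕ) (hN : 1 ≤ N) (L a f ω0 ω1 : ℝ)
    (hω0 : 0 < ω0) (hω1 : 0 < ω1) (x y : ℕ → ℝ)
    (hx : IsEquil9 N L a f ω0 ω1 x) (hy : IsEquil9 N L a f ω0 ω1 y) :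
    ∀ k ≤ N, x k = y k := by
  obtain ⟨hx0, hxm, hxN⟩ := hx
  obtain ⟨hy0, hym, hyN⟩ := hy
  set e : ℕ → ℝ := fun k => x k - y k with he
  have hω1' : (ω1:ℝ) ^ 2 ≠ 0 := pow_ne_zero _ hω1.ne'
  have hω0' : (ω0:ℝ) ^ 2 ≠ 0 := pow_ne_zero _ hω0.ne'
  have he0 : ω0 ^ 2 * e 0 = ω1 ^ 2 * (e 1 - e 0) := by
    simp only [he]; linear_combination hy0 - hx0
  have hstep : ∀ m, m + 1 ≤ N → e (m + 1) - e m = e 1 - e 0 := by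
    intro m
    induction m with
    | zero => intro _; rfl
    | succ n ih =>
      intro h
      have hmidx := hxm (n + 1) (Nat.succ_pos n) (by omega)
      have hmidy := hym (n + 1) (Nat.succ_pos n) (by omega)
      simp only [Nat.add_sub_cancel] at hmidx hmidy
      have h2 : ω1 ^ 2 * ((e (n + 2) - e (n + 1)) - (e (n + 1) - e n)) = 0 := by
        simp only [he]; linear_combination hmidx - hmidy
      have h3 : (e (n + 2) - e (n + 1)) - (e (n + 1) - e n) = 0 :=
        (mul_eq_zero.mp h2).resolve_left hω1'
      have h4 := ih (by omega)
      linarith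
  have hsum : ∀ k ≤ N, e k = e 0 + k * (e 1 - e 0) := by
    intro k
    induction k with
    | zero => intro _; simp
    | succ n ih =>
      intro h
      have h4 := ih (by omega)
      have h5 := hstep n h
      push_cast
      linear_combination h4 + h5
  obtain ⟨M, rfl⟩ : ∃ M, N = M + 1 := ⟨N - 1, (Nat.succ_pred_eq_of_pos hN).symm⟩
  simp only [Nat.add_sub_cancel] at hxN hyN
  have heN : ω0 ^ 2 * e (M + 1) + ω1 ^ 2 * (e (M + 1) - e M) = 0 := by
    simp only [he]; linear_combination hyN - hxN
  have hsumN := hsum (M + 1) le_rfl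
  have hstepN := hstep M le_rfl
  have hc : (2 * ω1 ^ 2 + ((M:ℝ) + 1) * ω0 ^ 2) * (e 1 - e 0) = 0 := by
    push_cast at hsumN
    linear_combination heN - ω0 ^ 2 * hsumN - ω1 ^ 2 * hstepN - he0
  have hDpos : (0:ℝ) < 2 * ω1 ^ 2 + ((M:ℝ) + 1) * ω0 ^ 2 := by positivity
  have hc0 : e 1 - e 0 = 0 := (mul_eq_zero.mp hc).resolve_left hDpos.ne'
  have he00 : e 0 = 0 := by
    have h6 : ω0 ^ 2 * e 0 = 0 := by rw [he0, hc0, mul_zero]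
    exact (mul_eq_zero.mp h6).resolve_left hω0'
  intro k hk
  have h7 := hsum k hk
  rw [hc0, he00, mul_zero, add_zero] at h7
  have h8 : x k - y k = 0 := h7
  linarith

theorem stmt9 (N : ℕ) (hN : 1 ≤ N) (L a f ω0 ω1 : ℝ)
    (hL : 0 < L) (ha : 0 < a) (hω0 : 0 < ω0) (hω1 : 0 < ω1) :
    -- existence
    (∃ x : ℕ → ℝ, IsEquil9 N L a f ω0 ω1 x) ∧
    -- uniqueness
    (∀ x y : ℕ → ℝ, IsEquil9 N L a f ω0 ω1 x → IsEquil9 N L a f ω0 ω1 y →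
      ∀ k ≤ N, x k = y k) ∧
    -- explicit form
    (∀ x : ℕ → ℝ, IsEquil9 N L a f ω0 ω1 x →
      x 0 = (ω1 ^ 2 * (L + N * (N + 1) * f / (2 * ω1 ^ 2) - N * a)
              + ω1 ^ 2 / ω0 ^ 2 * f * (N + 1)) / (2 * ω1 ^ 2 + N * ω0 ^ 2) ∧
      ∀ k, 1 ≤ k → k ≤ N →
        x k - x (k - 1) = -(f * k) / ω1 ^ 2 +
          (ω0 ^ 2 * (L + N * (N + 1) * f / (2 * ω1 ^ 2)) + f * (N + 1)
            + 2 * ω1 ^ 2 * a) / (2 * ω1 ^ 2 + N * ω0 ^ 2)) := by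
  have hex := eqX_isEquil N hN L a f ω0 ω1 hω0 hω1
  refine ⟨⟨eqX N L a f ω0 ω1, hex⟩,
    fun x y hx hy => uniq9 N hN L a f ω0 ω1 hω0 hω1 x y hx hy, fun x hx => ?_⟩
  have hkey : ∀ k ≤ N, x k = eqX N L a f ω0 ω1 k :=
    uniq9 N hN L a f ω0 ω1 hω0 hω1 x _ hx hex
  have h1 : (ω1:ℝ) ≠ 0 := hω1.ne'
  constructor
  · rw [hkey 0 (Nat.zero_le _)]
    simp [eqX]
  · intro k hk1 hkN
    obtain ⟨m, rfl⟩ : ∃ m, k = m + 1 := ⟨k - 1, (Nat.succ_pred_eq_of_pos hk1).symm⟩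
    rw [Nat.add_sub_cancel, hkey (m + 1) hkN, hkey m (by omega)]
    simp only [eqX]
    push_cast
    field_simp
    ring
end

section
/- For the chain of N+1 free particles with potential energy U = (ω₀²/2) x_0² + (ω₀²/2)(x_N − L)² + (ω₁²/2) Σ_{i=1}^{N} (x_i − x_{i−1} − a)² − f(x_0 + ... + x_N), the unique equilibrium configuration satisfies the strict ordering x_0 < x_1 < ... < x_N if and only if |f| < 2ω₁²(ω₀²L + 2ω₁²a)/((N−1)(2ω₁² + Nω₀²)). -/
theorem stmt10 (N : ℕ) (hN : 2 ≤ N) (L a f ω0 ω1 : ℝ)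
    (hL : 0 < L) (ha : 0 < a) (hω0 : 0 < ω0) (hω1 : 0 < ω1)
    (X : ℕ → ℝ)
    -- the unique equilibrium configuration of the free chain with force f on all particles
    (hX0 : X 0 = (ω1 ^ 2 * (L + N * (N + 1) * f / (2 * ω1 ^ 2) - N * a)
        + ω1 ^ 2 / ω0 ^ 2 * f * (N + 1)) / (2 * ω1 ^ 2 + N * ω0 ^ 2))
    (hXinc : ∀ k, 1 ≤ k → k ≤ N →
      X k - X (k - 1) = -(f * k) / ω1 ^ 2 +
        (ω0 ^ 2 * (L + N * (N + 1) * f / (2 * ω1 ^ 2)) + f * (N + 1)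
          + 2 * ω1 ^ 2 * a) / (2 * ω1 ^ 2 + N * ω0 ^ 2)) :
    -- strict ordering iff |f| is small enough
    (∀ k < N, X k < X (k + 1)) ↔
      |f| < 2 * ω1 ^ 2 * (ω0 ^ 2 * L + 2 * ω1 ^ 2 * a)
              / (((N : ℝ) - 1) * (2 * ω1 ^ 2 + N * ω0 ^ 2)) := by
  have hω1sq : (0:ℝ) < ω1 ^ 2 := by positivity
  have hD : (0:ℝ) < 2 * ω1 ^ 2 + N * ω0 ^ 2 := by positivity
  have hM : (0:ℝ) < ω0 ^ 2 * L + 2 * ω1 ^ 2 * a := by positivity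
  have hn2 : (2:ℝ) ≤ (N:ℝ) := by exact_mod_cast hN
  have hn1 : (1:ℝ) ≤ (N:ℝ) - 1 := by linarith
  set n : ℝ := (N:ℝ) with hn
  set D : ℝ := 2 * ω1 ^ 2 + n * ω0 ^ 2 with hDdef
  set M : ℝ := ω0 ^ 2 * L + 2 * ω1 ^ 2 * a with hMdef
  have hden : (0:ℝ) < 2 * ω1 ^ 2 * D := by positivity
  have hgap : ∀ k : ℕ, k < N →
      X (k + 1) - X k
        = (2 * ω1 ^ 2 * M + f * (n + 1 - 2 * ((k:ℝ) + 1)) * D) / (2 * ω1 ^ 2 * D) := by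
    intro k hk
    have h := hXinc (k + 1) (by omega) (by omega)
    simp only [Nat.add_sub_cancel] at h
    push_cast at h
    rw [h, hDdef, hMdef]
    field_simp
    ring
  have posnum : ∀ x : ℝ, 0 < x / (2 * ω1 ^ 2 * D) → 0 < x := by
    intro x hx
    rcases div_pos_iff.mp hx with ⟨h1, _⟩ | ⟨_, h2⟩
    · exact h1
    · linarith
  constructor
  · intro h
    rw [lt_div_iff₀ (by positivity : (0:ℝ) < (n - 1) * D)]
    have g1 := hgap 0 (by omega)
    have gN := hgap (N - 1) (by omega)
    have hcast : ((N - 1 : ℕ) : ℝ) = n - 1 := by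
      rw [hn]; push_cast [Nat.cast_sub (by omega : 1 ≤ N)]; ring
    rw [hcast] at gN
    have p1 : 0 < X (0 + 1) - X 0 := sub_pos.mpr (h 0 (by omega))
    have pN : 0 < X (N - 1 + 1) - X (N - 1) := sub_pos.mpr (h (N - 1) (by omega))
    rw [g1] at p1
    rw [gN] at pN
    have q1 := posnum _ p1
    have qN := posnum _ pN
    push_cast at q1 qN
    rcases abs_cases f with ⟨hf, _⟩ | ⟨hf, _⟩ <;> rw [hf] <;> nlinarith
  · intro hf k hk
    rw [← sub_pos, hgap k hk]
    apply div_pos _ hden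
    rw [lt_div_iff₀ (by positivity : (0:ℝ) < (n - 1) * D)] at hf
    have hkn : (k:ℝ) + 1 ≤ n := by
      rw [hn]; exact_mod_cast Nat.succ_le_of_lt hk
    have hk0 : (0:ℝ) ≤ (k:ℝ) := Nat.cast_nonneg k
    set c : ℝ := n + 1 - 2 * ((k:ℝ) + 1) with hc
    have hc1 : c ≤ n - 1 := by rw [hc]; linarith
    have hc2 : -(n - 1) ≤ c := by rw [hc]; linarith
    have habs : 0 ≤ |f| := abs_nonneg f
    rcases abs_cases f with ⟨hfe, hf0⟩ | ⟨hfe, hf0⟩ <;> rw [hfe] at hf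
    · have h1 : f * (-(n - 1)) ≤ f * c := mul_le_mul_of_nonneg_left hc2 hf0
      have h2 : f * (-(n - 1)) * D ≤ f * c * D := mul_le_mul_of_nonneg_right h1 hD.le
      have h3 : f * (-(n - 1)) * D = -(f * ((n - 1) * D)) := by ring
      linarith
    · have h1 : f * (n - 1) ≤ f * c := mul_le_mul_of_nonpos_left hc1 hf0.le
      have h2 : f * (n - 1) * D ≤ f * c * D := mul_le_mul_of_nonneg_right h1 hD.le
      have h3 : f * (n - 1) * D = -(-f * ((n - 1) * D)) := by ring
      linarith
end
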